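/- For every n ∈ ℕ₀ and every k = (k_1,...,k_s) with 1 ≤ k_i ≤ m: H_s(n) ∈ P_k if and only if n ≡ ỹ_m + A_k (mod B_{τ·k}). -/

import Mathlib

/-!
Reading `n mod b^T` backwards gives the first `T` base-`b` digits of `φ_b(n)`, so `φ_b(n)` lies in
the elementary interval `[φ_b(c), φ_b(c) + b^{-T})` (for `c < b^T`) exactly when `n ≡ c (mod b^T)`.
The `i`-th side of `P_k` is such an interval, with `T = τ_i k_i` and
`c = Σ_{j<k_i} b_i^{jτ_i-1} = ẏ_{i,τ_i k_i} - b_i^{τ_i k_i - 1}`. Modulo `b_i^{τ_i k_i}` the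
Chinese-remainder formulas defining `ỹ_m` and `A_k` reduce to `ỹ_m ≡ ẏ_{i,τ_i k_i}` and
`A_k ≡ -b_i^{τ_i k_i - 1}`, and the Chinese remainder theorem glues the coordinates together.
-/

open Finset

open scoped Classical

/-- The radical inverse function in base `b`: `φ_b(n) = Σ_j n_j b^{-j-1}`. -/
noncomputable def radInv (b n : ℕ) : ℝ :=
  ∑' j : ℕ, ((n / b ^ j % b : ℕ) : ℝ) / (b : ℝ) ^ (j + 1)

/-- The axis-parallel box `[0, y) = ∏_i [0, y_i)`. -/
def box {s : ℕ} (y : Fin s → ℝ) : Set (Fin s → ℝ) :=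
  Set.univ.pi fun i => Set.Ico 0 (y i)

/-- The discrepancy function `Δ(y, (x_n)_{n=a}^{a+N-1})`. -/
noncomputable def disc {s : ℕ} (x : ℕ → Fin s → ℝ) (a N : ℕ) (y : Fin s → ℝ) : ℝ :=
  ∑ n ∈ Finset.Ico a (a + N),
    ((box y).indicator (fun _ => (1 : ℝ)) (x n) - ∏ i, y i)

/-- The star discrepancy of `(x_n)_{n=a}^{a+N-1}`. -/
noncomputable def Dstar {s : ℕ} (x : ℕ → Fin s → ℝ) (a N : ℕ) : ℝ :=
  sSup {v : ℝ | ∃ y : Fin s → ℝ, (∀ i, y i ∈ Set.Ico (0 : ℝ) 1) ∧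
    v = |disc x a N y| / (N : ℝ)}

/-- `(x_n)_{0 ≤ n < b^m}` is a `(t,m,s)`-net in base `b`. -/
def IsNet {s : ℕ} (b t m : ℕ) (x : ℕ → Fin s → ℝ) : Prop :=
  (∀ n < b ^ m, ∀ i, x n i ∈ Set.Ico (0 : ℝ) 1) ∧
  ∀ d a : Fin s → ℕ, (∀ i, a i < b ^ d i) → (∑ i, d i) + t = m →
    ((Finset.range (b ^ m)).filter
      (fun n => ∀ i, x n i ∈ Set.Ico ((a i : ℝ) / b ^ d i) ((a i + 1 : ℝ) / b ^ d i))).card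
      = b ^ t

/-- The `j`-th `b`-adic digit (`j ≥ 1`) of a real number `x ∈ [0,1)`. -/
noncomputable def bdigit (b : ℕ) (x : ℝ) (j : ℕ) : ℕ := (⌊x * (b : ℝ) ^ j⌋ % (b : ℤ)).toNat % b

/-- The `b`-adic absolute valuation `‖x‖_b = b^{-(k+1)}` where the digits
`x_1, …, x_k` vanish and `x_{k+1} ≠ 0`; it is `0` when all digits vanish. -/
noncomputable def bval (b : ℕ) (x : ℝ) : ℝ :=
  if h : ∃ j, 1 ≤ j ∧ bdigit b x j ≠ 0 then
    (1 : ℝ) / (b : ℝ) ^ sInf {j | 1 ≤ j ∧ bdigit b x j ≠ 0}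
  else 0

/-- The `b`-adic absolute valuation of a vector, `‖x‖_b = ∏_j ‖x^{(j)}‖_b`. -/
noncomputable def bvalVec {s : ℕ} (b : ℕ) (x : Fin s → ℝ) : ℝ := ∏ i, bval b (x i)

/-- Digitwise subtraction modulo `b`: `x ⊖ σ`. -/
noncomputable def bsub (b : ℕ) (x σ : ℝ) : ℝ :=
  ∑' j : ℕ, (((bdigit b x (j + 1) + b - bdigit b σ (j + 1)) % b : ℕ) : ℝ) / (b : ℝ) ^ (j + 1)

/-- Digitwise addition modulo `b`: `x ⊕ σ`. -/
noncomputable def badd (b : ℕ) (x σ : ℝ) : ℝ :=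
  ∑' j : ℕ, (((bdigit b x (j + 1) + bdigit b σ (j + 1)) % b : ℕ) : ℝ) / (b : ℝ) ^ (j + 1)

/-- A `b^m`-point set in `[0,1)^s` is `d`-admissible in base `b`. -/
def IsAdmissible {s : ℕ} (b m : ℕ) (d : ℤ) (x : ℕ → Fin s → ℝ) : Prop :=
  ∀ k n : ℕ, k < n → n < b ^ m →
    bvalVec b (fun i => bsub b (x n i) (x k i)) > (b : ℝ) ^ (-((m : ℤ) + d))

/-- The two-dimensional Halton sequence in bases `2` and `3`. -/
noncomputable def H23 : ℕ → Fin 2 → ℝ := fun n => ![radInv 2 n, radInv 3 n]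

/-- `ytil` is the quantity `ỹ_m` for the Halton sequence in bases `2` and `3`
(so that `τ₁ = 2`, `τ₂ = 1`). -/
def IsYtilde (m ytil : ℕ) : Prop :=
  ytil < 2 ^ (2 * (m + 1)) * 3 ^ (m + 1) ∧
  ∃ M₁ M₂ : ℤ,
    M₁ * 3 ^ (m + 1) ≡ 1 [ZMOD (2 : ℤ) ^ (2 * (m + 1))] ∧
    M₂ * 2 ^ (2 * (m + 1)) ≡ 1 [ZMOD (3 : ℤ) ^ (m + 1)] ∧
    (ytil : ℤ) ≡ M₁ * 3 ^ (m + 1) * (∑ j ∈ Finset.Icc 1 (m + 1), (2 : ℤ) ^ (2 * j - 1))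
        + M₂ * 2 ^ (2 * (m + 1)) * (∑ j ∈ Finset.Icc 1 (m + 1), (3 : ℤ) ^ (j - 1))
      [ZMOD (2 : ℤ) ^ (2 * (m + 1)) * 3 ^ (m + 1)]

/-- Reverses the first `T` base-`b` digits of `x`. -/
def digitRev (b : ℕ) : ℕ → ℕ → ℕ
  | 0, _ => 0
  | T + 1, x => x % b * b ^ T + digitRev b T (x / b)

section DigitRev

variable {b : ℕ}

@[simp]
lemma digitRev_zero (b x : ℕ) : digitRev b 0 x = 0 := rfl

lemma digitRev_succ (b T x : ℕ) :
    digitRev b (T + 1) x = x % b * b ^ T + digitRev b T (x / b) := rfl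

lemma digitRev_lt (hb : 0 < b) (T x : ℕ) : digitRev b T x < b ^ T := by
  induction T generalizing x with
  | zero => simp
  | succ T ih =>
    calc digitRev b (T + 1) x = x % b * b ^ T + digitRev b T (x / b) := rfl
      _ < x % b * b ^ T + b ^ T := Nat.add_lt_add_left (ih _) _
      _ = (x % b + 1) * b ^ T := by ring
      _ ≤ b * b ^ T := Nat.mul_le_mul_right _ (Nat.mod_lt x hb)
      _ = b ^ (T + 1) := (pow_succ' b T).symm

lemma digitRev_add (b T U n : ℕ) :
    digitRev b (T + U) n = b ^ U * digitRev b T (n % b ^ T) + digitRev b U (n / b ^ T) := by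
  induction T generalizing n with
  | zero => simp
  | succ T ih =>
    rw [show T + 1 + U = T + U + 1 by omega, digitRev_succ, ih, digitRev_succ, pow_succ',
      Nat.mod_mul_right_mod, Nat.mod_mul_right_div_self, Nat.div_div_eq_div_mul, pow_add]
    ring

lemma digitRev_mod_pow (b T n : ℕ) : digitRev b T (n % b ^ T) = digitRev b T n := by
  simpa using (digitRev_add b T 0 n).symm

lemma digitRev_succ' (b T n : ℕ) : digitRev b (T + 1) n = b * digitRev b T n + n / b ^ T % b := by
  rw [digitRev_add b T 1 n]
  simp [digitRev_succ, digitRev_mod_pow]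

lemma digitRev_digitRev (hb : 0 < b) {T x : ℕ} (hx : x < b ^ T) :
    digitRev b T (digitRev b T x) = x := by
  induction T generalizing x with
  | zero => simp_all
  | succ T ih =>
    have hr := digitRev_lt hb T (x / b)
    have hlow : (x % b * b ^ T + digitRev b T (x / b)) % b ^ T = digitRev b T (x / b) := by
      rw [Nat.mul_add_mod_self_right, Nat.mod_eq_of_lt hr]
    have hhigh : (x % b * b ^ T + digitRev b T (x / b)) / b ^ T = x % b := by
      rw [add_comm, Nat.add_mul_div_right _ _ (pos_of_ne_zero (by positivity)),
        Nat.div_eq_of_lt hr, zero_add]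
    have hxb : x / b < b ^ T := Nat.div_lt_of_lt_mul (by rwa [← pow_succ'])
    rw [digitRev_succ b T x, digitRev_succ', ← digitRev_mod_pow, hlow, hhigh,
      ih hxb, Nat.mod_mod, Nat.div_add_mod]

lemma digitRev_eq_digitRev_iff_mod_eq (hb : 0 < b) {T c : ℕ} (hc : c < b ^ T) (n : ℕ) :
    digitRev b T n = digitRev b T c ↔ n % b ^ T = c := by
  refine ⟨fun h => ?_, fun h => by rw [← h, digitRev_mod_pow]⟩
  rw [← digitRev_digitRev hb (Nat.mod_lt n (by positivity)), digitRev_mod_pow, h,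
    digitRev_digitRev hb hc]

end DigitRev

section RadicalInverse

variable {b : ℕ}

@[simp]
lemma radInv_zero (b : ℕ) : radInv b 0 = 0 := by
  simp [radInv]

lemma radInv_nonneg (b n : ℕ) : 0 ≤ radInv b n :=
  tsum_nonneg fun _ => by positivity

lemma radInv_eq_mod_add_div (hb : 1 < b) (n : ℕ) :
    radInv b n = ((n % b : ℕ) + radInv b (n / b)) / b := by
  have hdigits : Summable fun j : ℕ => ((n / b ^ j % b : ℕ) : ℝ) / (b : ℝ) ^ (j + 1) := by
    refine summable_of_ne_finset_zero (s := range n) fun j hj => ?_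
    rw [Nat.div_eq_of_lt ((Nat.lt_pow_self hb).trans_le
      (Nat.pow_le_pow_right (by omega) (by simpa using hj)))]
    simp
  rw [radInv, hdigits.tsum_eq_zero_add, radInv, add_div, ← tsum_div_const]
  congr 1
  · simp only [pow_zero, Nat.div_one, zero_add, pow_one]
  · refine tsum_congr fun j => ?_
    rw [pow_succ' b j, ← Nat.div_div_eq_div_mul, pow_succ (b : ℝ) (j + 1), div_div]

lemma radInv_eq_digitRev_add (hb : 1 < b) (T n : ℕ) :
    radInv b n = (digitRev b T n + radInv b (n / b ^ T)) / b ^ T := by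
  induction T generalizing n with
  | zero => simp
  | succ T ih =>
    rw [radInv_eq_mod_add_div hb n, ih, digitRev_succ, Nat.div_div_eq_div_mul, ← pow_succ']
    simp only [Nat.cast_add, Nat.cast_mul, Nat.cast_pow]
    field_simp
    ring

lemma radInv_of_lt (hb : 1 < b) {T n : ℕ} (hn : n < b ^ T) :
    radInv b n = digitRev b T n / b ^ T := by
  rw [radInv_eq_digitRev_add hb T, Nat.div_eq_of_lt hn, radInv_zero, add_zero]

lemma radInv_lt_one (hb : 1 < b) (n : ℕ) : radInv b n < 1 := by
  rw [radInv_of_lt hb (Nat.lt_pow_self hb), div_lt_one (by positivity)]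
  exact_mod_cast digitRev_lt (by omega) n n

lemma radInv_one (hb : 1 < b) : radInv b 1 = (b : ℝ)⁻¹ := by
  rw [radInv_eq_mod_add_div hb 1, Nat.mod_eq_of_lt hb, Nat.div_eq_of_lt hb, radInv_zero,
    add_zero, Nat.cast_one, one_div]

lemma radInv_add_pow_mul (hb : 1 < b) {T x : ℕ} (hx : x < b ^ T) (a : ℕ) :
    radInv b (x + b ^ T * a) = radInv b x + radInv b a / b ^ T := by
  rw [radInv_eq_digitRev_add hb T, radInv_of_lt hb hx, ← digitRev_mod_pow,
    Nat.add_mul_mod_self_left, Nat.mod_eq_of_lt hx,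
    Nat.add_mul_div_left _ _ (by positivity), Nat.div_eq_of_lt hx, zero_add, add_div]

theorem radInv_mem_Ico_iff_mod_eq (hb : 1 < b) {T c : ℕ} (hc : c < b ^ T) (n : ℕ) :
    radInv b n ∈ Set.Ico (radInv b c) (radInv b c + ((b : ℝ) ^ T)⁻¹) ↔ n % b ^ T = c := by
  have hbT : (0 : ℝ) < (b : ℝ) ^ T := by positivity
  have hx : (0 : ℝ) ≤ digitRev b T n + radInv b (n / b ^ T) :=
    add_nonneg (Nat.cast_nonneg _) (radInv_nonneg b _)
  have hfloor : ⌊(digitRev b T n : ℝ) + radInv b (n / b ^ T)⌋₊ = digitRev b T n :=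
    (Nat.floor_eq_iff hx).2 ⟨by linarith [radInv_nonneg b (n / b ^ T)],
      by linarith [radInv_lt_one hb (n / b ^ T)]⟩
  rw [← digitRev_eq_digitRev_iff_mod_eq (by omega) hc, radInv_eq_digitRev_add hb T n,
    radInv_of_lt hb hc, inv_eq_one_div, ← add_div, Set.mem_Ico, div_le_div_iff_of_pos_right hbT,
    div_lt_div_iff_of_pos_right hbT, ← Nat.floor_eq_iff hx, hfloor, eq_comm]

end RadicalInverse

section HaltonInterval

variable {b τ : ℕ}

lemma sum_pow_mul_sub_one_lt (hb : 1 < b) (hτ : 1 ≤ τ) (K : ℕ) :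
    ∑ j ∈ Icc 1 K, b ^ (j * τ - 1) < b ^ (K * τ) := by
  induction K with
  | zero => simp
  | succ K ih =>
    have hexp : (K + 1) * τ = K * τ + τ := by ring
    have hle : b ^ (K * τ) ≤ b ^ ((K + 1) * τ - 1) := Nat.pow_le_pow_right (by omega) (by omega)
    have hsucc : b ^ ((K + 1) * τ - 1) * b = b ^ ((K + 1) * τ) := by
      rw [← pow_succ]; congr 1; omega
    calc ∑ j ∈ Icc 1 (K + 1), b ^ (j * τ - 1)
        = ∑ j ∈ Icc 1 K, b ^ (j * τ - 1) + b ^ ((K + 1) * τ - 1) := sum_Icc_succ_top (by omega) _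
      _ < 2 * b ^ ((K + 1) * τ - 1) := by omega
      _ ≤ b * b ^ ((K + 1) * τ - 1) := Nat.mul_le_mul_right _ hb
      _ = b ^ ((K + 1) * τ) := by rw [mul_comm, hsucc]

lemma radInv_sum_pow_mul_sub_one (hb : 1 < b) (hτ : 1 ≤ τ) (K : ℕ) :
    radInv b (∑ j ∈ Icc 1 K, b ^ (j * τ - 1)) = ∑ j ∈ Icc 1 K, ((b : ℝ) ^ (j * τ))⁻¹ := by
  induction K with
  | zero => simp
  | succ K ih =>
    obtain ⟨E, hE⟩ : ∃ E, (K + 1) * τ = E + 1 := ⟨K * τ + τ - 1, by rw [add_mul, one_mul]; omega⟩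
    have hlt : ∑ j ∈ Icc 1 K, b ^ (j * τ - 1) < b ^ E :=
      (sum_pow_mul_sub_one_lt hb hτ K).trans_le
        (Nat.pow_le_pow_right (by omega) (by rw [add_mul, one_mul] at hE; omega))
    rw [sum_Icc_succ_top (by omega), sum_Icc_succ_top (by omega), hE, Nat.add_sub_cancel,
      ← mul_one (b ^ E), radInv_add_pow_mul (by omega) hlt, ih, radInv_one (by omega)]
    ring

theorem radInv_mem_Ico_sum_inv_pow_iff_modEq (hb : 1 < b) (hτ : 1 ≤ τ) {k : ℕ} (hk : 1 ≤ k)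
    (n : ℕ) :
    radInv b n ∈ Set.Ico ((∑ j ∈ Icc 1 k, ((b : ℝ) ^ (j * τ))⁻¹) - ((b : ℝ) ^ (τ * k))⁻¹)
        (∑ j ∈ Icc 1 k, ((b : ℝ) ^ (j * τ))⁻¹) ↔
      (n : ℤ) ≡ ∑ j ∈ Icc 1 k, (b : ℤ) ^ (j * τ - 1) - (b : ℤ) ^ (τ * k - 1)
        [ZMOD (b : ℤ) ^ (τ * k)] := by
  obtain ⟨K, rfl⟩ : ∃ K, k = K + 1 := ⟨k - 1, by omega⟩
  have hc : ∑ j ∈ Icc 1 K, b ^ (j * τ - 1) < b ^ ((K + 1) * τ) :=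
    (sum_pow_mul_sub_one_lt hb hτ K).trans_le (Nat.pow_le_pow_right (by omega) (by nlinarith))
  have hmod : (n : ℤ) ≡ ((∑ j ∈ Icc 1 K, b ^ (j * τ - 1) : ℕ) : ℤ)
        [ZMOD ((b ^ ((K + 1) * τ) : ℕ) : ℤ)] ↔
      n % b ^ ((K + 1) * τ) = ∑ j ∈ Icc 1 K, b ^ (j * τ - 1) := by
    rw [Int.natCast_modEq_iff, Nat.ModEq, Nat.mod_eq_of_lt hc]
  rw [mul_comm τ, sum_Icc_succ_top (by omega), sum_Icc_succ_top (by omega), add_sub_cancel_right,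
    add_sub_cancel_right, ← radInv_sum_pow_mul_sub_one hb hτ K,
    radInv_mem_Ico_iff_mod_eq (by omega) hc, ← hmod]
  push_cast
  rfl

end HaltonInterval

lemma sum_Icc_pow_mul_sub_one_modEq (τ : ℕ) (b : ℤ) {k K : ℕ} (hkK : k ≤ K) :
    ∑ j ∈ Icc 1 K, b ^ (j * τ - 1) ≡ ∑ j ∈ Icc 1 k, b ^ (j * τ - 1) [ZMOD b ^ (τ * k)] := by
  induction K, hkK using Nat.le_induction with
  | base => rfl
  | succ K hkK ih =>
    have hexp : τ * k ≤ (K + 1) * τ - 1 := by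
      rcases Nat.eq_zero_or_pos τ with rfl | hτ
      · simp
      have := Nat.mul_le_mul_left τ hkK
      have : (K + 1) * τ = τ * K + τ := by ring
      omega
    rw [sum_Icc_succ_top (by omega)]
    simpa using ih.add (Int.modEq_zero_iff_dvd.2 (pow_dvd_pow b hexp))

lemma Int.sum_mul_prod_erase_mul_modEq {ι : Type*} [Fintype ι] [DecidableEq ι] (q M a : ι → ℤ)
    {i : ι} (hM : M i * ∏ j ∈ univ.erase i, q j ≡ 1 [ZMOD q i]) :
    ∑ l, M l * (∏ j ∈ univ.erase l, q j) * a l ≡ a i [ZMOD q i] := by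
  have hothers : ∀ l ∈ univ, l ≠ i → M l * (∏ j ∈ univ.erase l, q j) * a l ≡ 0 [ZMOD q i] :=
    fun l _ hl => Int.modEq_zero_iff_dvd.2
      (((dvd_prod_of_mem q (mem_erase.2 ⟨hl.symm, mem_univ i⟩)).mul_left _).mul_right _)
  refine (Int.sum_modEq_single (fun h => absurd (mem_univ i) h) hothers).trans ?_
  simpa using hM.mul_right (a i)

lemma Int.modEq_prod_iff {ι : Type*} [Fintype ι] {q : ι → ℤ}
    (hq : Pairwise fun i j => IsCoprime (q i) (q j)) {a c : ℤ} :
    a ≡ c [ZMOD ∏ i, q i] ↔ ∀ i, a ≡ c [ZMOD q i] :=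
  ⟨fun h i => h.of_dvd (dvd_prod_of_mem q (mem_univ i)),
    fun h => Int.modEq_iff_dvd.2 (Fintype.prod_dvd_of_coprime hq fun i => (h i).dvd)⟩

theorem halton_mem_Pk_iff_ytilde_general (s m : ℕ) (b : Fin s → ℕ) (hb : ∀ i, 2 ≤ b i)
    (hcop : ∀ i j, i ≠ j → Nat.Coprime (b i) (b j))
    (τ : Fin s → ℕ)
    (hτpos : ∀ i, 1 ≤ τ i)
    (k : Fin s → ℕ) (hk : ∀ i, 1 ≤ k i ∧ k i ≤ m)
    (M : Fin s → ℤ)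
    (hM : ∀ i, M i * ∏ j ∈ Finset.univ.erase i, (b j : ℤ) ^ (τ j * k j) ≡ 1
      [ZMOD ((b i : ℤ) ^ (τ i * k i))])
    (A : ℕ)
    (hA2 : (A : ℤ) ≡ -∑ i, M i * ((b i : ℤ) ^ (τ i * k i - 1) *
        ∏ j ∈ Finset.univ.erase i, (b j : ℤ) ^ (τ j * k j))
      [ZMOD (∏ i, (b i : ℤ) ^ (τ i * k i))])
    (M' : Fin s → ℤ)
    (hM' : ∀ i, M' i * ∏ j ∈ Finset.univ.erase i, (b j : ℤ) ^ (τ j * (m + 1)) ≡ 1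
      [ZMOD ((b i : ℤ) ^ (τ i * (m + 1)))])
    (ytil : ℕ)
    (hy2 : (ytil : ℤ) ≡ ∑ i, M' i * (∏ j ∈ Finset.univ.erase i, (b j : ℤ) ^ (τ j * (m + 1))) *
        (∑ j ∈ Finset.Icc 1 (m + 1), (b i : ℤ) ^ (j * τ i - 1))
      [ZMOD (∏ i, (b i : ℤ) ^ (τ i * (m + 1)))])
    (n : ℕ) :
    (∀ i, radInv (b i) n ∈
        Set.Ico ((∑ j ∈ Finset.Icc 1 (k i), ((b i : ℝ) ^ (j * τ i))⁻¹)
            - ((b i : ℝ) ^ (τ i * k i))⁻¹)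
          (∑ j ∈ Finset.Icc 1 (k i), ((b i : ℝ) ^ (j * τ i))⁻¹)) ↔
      (n : ℤ) ≡ (ytil : ℤ) + (A : ℤ) [ZMOD (∏ i, (b i : ℤ) ^ (τ i * k i))] := by
  have hA_mod (i : Fin s) :
      (A : ℤ) ≡ -(b i : ℤ) ^ (τ i * k i - 1) [ZMOD (b i : ℤ) ^ (τ i * k i)] := by
    refine (hA2.of_dvd (dvd_prod_of_mem _ (mem_univ i))).trans (Int.ModEq.neg ?_)
    convert Int.sum_mul_prod_erase_mul_modEq (fun i => (b i : ℤ) ^ (τ i * k i)) M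
      (fun i => (b i : ℤ) ^ (τ i * k i - 1)) (hM i) using 2 with l
    ring
  have hy_mod (i : Fin s) : (ytil : ℤ) ≡ ∑ j ∈ Icc 1 (k i), (b i : ℤ) ^ (j * τ i - 1)
      [ZMOD (b i : ℤ) ^ (τ i * k i)] := by
    have hkm : k i ≤ m + 1 := by have := hk i; omega
    have hy_mod_m := (hy2.of_dvd (dvd_prod_of_mem _ (mem_univ i))).trans
      (Int.sum_mul_prod_erase_mul_modEq (fun i => (b i : ℤ) ^ (τ i * (m + 1))) M'
        (fun i => ∑ j ∈ Icc 1 (m + 1), (b i : ℤ) ^ (j * τ i - 1)) (hM' i))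
    exact (hy_mod_m.of_dvd (pow_dvd_pow _ (Nat.mul_le_mul_left _ hkm))).trans
      (sum_Icc_pow_mul_sub_one_modEq (τ i) _ hkm)
  have hcoprime :
      Pairwise fun i j => IsCoprime ((b i : ℤ) ^ (τ i * k i)) ((b j : ℤ) ^ (τ j * k j)) :=
    fun i j hij => (Nat.isCoprime_iff_coprime.2 (hcop i j hij)).pow
  rw [Int.modEq_prod_iff hcoprime]
  refine forall_congr' fun i => ?_
  rw [radInv_mem_Ico_sum_inv_pow_iff_modEq (hb i) (hτpos i) (hk i).1, sub_eq_add_neg]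
  have hsum := (hy_mod i).add (hA_mod i)
  exact ⟨fun h => h.trans hsum.symm, fun h => h.trans hsum⟩

/-- `H_s(n) ∈ P_k` iff `n ≡ ỹ_m + A_k (mod B_{τ·k})`. -/
theorem halton_mem_Pk_iff_ytilde (s m : ℕ) (hs : 1 ≤ s) (b : Fin s → ℕ) (hb : ∀ i, 2 ≤ b i)
    (hcop : ∀ i j, i ≠ j → Nat.Coprime (b i) (b j))
    (τ : Fin s → ℕ)
    (hτ : ∀ i, τ i = sInf {l : ℕ | 1 ≤ l ∧ l < (∏ j ∈ Finset.univ.erase i, b j) ∧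
      b i ^ l % (∏ j ∈ Finset.univ.erase i, b j) = 1})
    (hτpos : ∀ i, 1 ≤ τ i)
    (k : Fin s → ℕ) (hk : ∀ i, 1 ≤ k i ∧ k i ≤ m)
    (M : Fin s → ℤ)
    (hM : ∀ i, M i * ∏ j ∈ Finset.univ.erase i, (b j : ℤ) ^ (τ j * k j) ≡ 1
      [ZMOD ((b i : ℤ) ^ (τ i * k i))])
    (A : ℕ) (hA : A < ∏ i, b i ^ (τ i * k i))
    (hA2 : (A : ℤ) ≡ -∑ i, M i * ((b i : ℤ) ^ (τ i * k i - 1) *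
        ∏ j ∈ Finset.univ.erase i, (b j : ℤ) ^ (τ j * k j))
      [ZMOD (∏ i, (b i : ℤ) ^ (τ i * k i))])
    (M' : Fin s → ℤ)
    (hM' : ∀ i, M' i * ∏ j ∈ Finset.univ.erase i, (b j : ℤ) ^ (τ j * (m + 1)) ≡ 1
      [ZMOD ((b i : ℤ) ^ (τ i * (m + 1)))])
    (ytil : ℕ) (hy : ytil < ∏ i, b i ^ (τ i * (m + 1)))
    (hy2 : (ytil : ℤ) ≡ ∑ i, M' i * (∏ j ∈ Finset.univ.erase i, (b j : ℤ) ^ (τ j * (m + 1))) *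
        (∑ j ∈ Finset.Icc 1 (m + 1), (b i : ℤ) ^ (j * τ i - 1))
      [ZMOD (∏ i, (b i : ℤ) ^ (τ i * (m + 1)))])
    (n : ℕ) :
    (∀ i, radInv (b i) n ∈
        Set.Ico ((∑ j ∈ Finset.Icc 1 (k i), ((b i : ℝ) ^ (j * τ i))⁻¹)
            - ((b i : ℝ) ^ (τ i * k i))⁻¹)
          (∑ j ∈ Finset.Icc 1 (k i), ((b i : ℝ) ^ (j * τ i))⁻¹)) ↔
      (n : ℤ) ≡ (ytil : ℤ) + (A : ℤ) [ZMOD (∏ i, (b i : ℤ) ^ (τ i * k i))] :=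
  halton_mem_Pk_iff_ytilde_general s m b hb hcop τ hτpos k hk M hM A hA2 M' hM' ytil hy2 n
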